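/- With a fixed vertical pattern value V and horizontal Mogensen exponent w_h < 0 (so that −2w_h > 0), the expected beamforming gain satisfies E[G(m)] = 3η V Γ(1/2 − w_h) / (√π Γ(1 − w_h)), where G(m) = Σ_{c=1}^{3} ρ_c H(α_c) V with ρ_c Bernoulli(η) independent of the uniform angles α_c on intervals of length 2π/3 covering a full circle. -/

import Mathlib

/-!
Write `p = -2 w_h`. By linearity, independence and `E[ρ_c] = η`, sector `c` contributes
`η V (3 / 2π) ∫ |cos (ψ - x)|^p` over its arc. The three arcs tile `[0, 2π]`, and by periodicity
and symmetry of `|cos|` the integral over the full circle is `4 ∫₀^{π/2} cos^p x dx`, which the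
substitution `u = sin² x` turns into the Beta integral `2 B(1/2, (p + 1)/2)`, i.e.
`2 √π Γ((p + 1)/2) / Γ(p/2 + 1)`.
-/

open MeasureTheory ProbabilityTheory Real Set intervalIntegral

theorem integral_rpow_mul_one_sub_rpow {a b : ℝ} (ha : 0 < a) (hb : 0 < b) :
    ∫ t in (0:ℝ)..1, t ^ (a - 1) * (1 - t) ^ (b - 1) = Gamma a * Gamma b / Gamma (a + b) := by
  apply Complex.ofReal_injective
  have hcast : ∀ t ∈ uIcc (0:ℝ) 1, ((t ^ (a - 1) * (1 - t) ^ (b - 1) : ℝ) : ℂ)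
      = (t : ℂ) ^ ((a : ℂ) - 1) * (1 - (t : ℂ)) ^ ((b : ℂ) - 1) := fun t ht => by
    rw [uIcc_of_le zero_le_one] at ht
    rw [Complex.ofReal_mul, Complex.ofReal_cpow ht.1, Complex.ofReal_cpow (sub_nonneg.2 ht.2)]
    push_cast
    rfl
  rw [← intervalIntegral.integral_ofReal, integral_congr hcast, ← Complex.betaIntegral,
    Complex.betaIntegral_eq_Gamma_mul_div _ _ (by simpa) (by simpa)]
  push_cast [← Complex.Gamma_ofReal]
  rfl

theorem integral_cos_rpow_zero_pi_div_two {p : ℝ} (hp : -1 < p) :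
    ∫ x in (0:ℝ)..π / 2, cos x ^ p = √π * Gamma ((p + 1) / 2) / (2 * Gamma (p / 2 + 1)) := by
  set g : ℝ → ℝ := fun u => 1 / 2 * (u ^ ((1:ℝ) / 2 - 1) * (1 - u) ^ ((p + 1) / 2 - 1))
  have hsin_cos_pos : ∀ x ∈ Ioo 0 (π / 2), 0 < sin x ∧ 0 < cos x := fun x hx =>
    ⟨sin_pos_of_pos_of_lt_pi hx.1 (by linarith [hx.2, pi_pos]),
      cos_pos_of_mem_Ioo ⟨by linarith [hx.1, pi_pos], hx.2⟩⟩
  have hsubst : ∀ x ∈ Ioo 0 (π / 2), cos x ^ p = (2 * sin x * cos x) • g (sin x ^ 2) := by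
    intro x hx
    obtain ⟨hs, hc⟩ := hsin_cos_pos x hx
    simp only [g, smul_eq_mul]
    rw [← cos_sq', ← rpow_natCast, ← rpow_natCast, ← rpow_mul hs.le, ← rpow_mul hc.le,
      show ((2 : ℕ) : ℝ) * (1 / 2 - 1) = -1 by norm_num,
      show ((2 : ℕ) : ℝ) * ((p + 1) / 2 - 1) = p - 1 by push_cast; ring, rpow_neg_one,
      show p = 1 + (p - 1) by ring, rpow_add hc, rpow_one, add_sub_cancel_left]
    field_simp
  have hderiv : ∀ x ∈ Ioo 0 (π / 2), HasDerivAt (fun x => sin x ^ 2) (2 * sin x * cos x) x :=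
    fun x _ => by simpa [mul_comm, mul_assoc] using (hasDerivAt_sin x).fun_pow 2
  have hderiv_nonneg : ∀ x ∈ Ioo 0 (π / 2), 0 ≤ 2 * sin x * cos x := fun x hx => by
    obtain ⟨hs, hc⟩ := hsin_cos_pos x hx
    positivity
  rw [integral_of_le (by positivity), ← integral_Icc_eq_integral_Ioc,
    integral_Icc_eq_integral_Ioo, setIntegral_congr_fun measurableSet_Ioo hsubst,
    ← integral_Icc_eq_integral_Ioo, integral_Icc_deriv_smul_of_deriv_nonneg (g := g)
      (by fun_prop) hderiv hderiv_nonneg (by positivity)]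
  rw [sin_zero, sin_pi_div_two, zero_pow two_ne_zero, one_pow, integral_Icc_eq_integral_Ioc,
    ← integral_of_le zero_le_one, intervalIntegral.integral_const_mul,
    integral_rpow_mul_one_sub_rpow one_half_pos (by linarith), Gamma_one_half_eq,
    show 1 / 2 + (p + 1) / 2 = p / 2 + 1 by ring]
  ring

theorem Function.Periodic.intervalIntegral_comp_sub_left_eq {E : Type*} [NormedAddCommGroup E]
    [NormedSpace ℝ E] {f : ℝ → E} {T : ℝ} (hf : Function.Periodic f T) (t ψ : ℝ) :
    ∫ x in t..t + T, f (ψ - x) = ∫ x in t..t + T, f x := by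
  rw [integral_comp_sub_left, show ψ - t = ψ - (t + T) + T by ring, hf.intervalIntegral_add_eq]

theorem integral_abs_cos_rpow_zero_two_pi {p : ℝ} (hp : 0 ≤ p) :
    ∫ x in (0:ℝ)..2 * π, |cos x| ^ p = 4 * ∫ x in (0:ℝ)..π / 2, cos x ^ p := by
  have hint : ∀ a b : ℝ, IntervalIntegrable (fun x => |cos x| ^ p) volume a b := fun a b =>
    (continuous_cos.abs.rpow_const fun _ => Or.inr hp).intervalIntegrable a b
  have hper : Function.Periodic (fun x => |cos x| ^ p) π := fun x => by simp [cos_add_pi]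
  have hsymm : ∫ x in π / 2..π, |cos x| ^ p = ∫ x in 0..π / 2, |cos x| ^ p := by
    simpa [cos_pi_sub, show π - π / 2 = π / 2 by ring] using
      (integral_comp_sub_left (fun x => |cos x| ^ p) π (a := 0) (b := π / 2)).symm
  have habs : ∫ x in 0..π / 2, |cos x| ^ p = ∫ x in 0..π / 2, cos x ^ p := by
    refine integral_congr fun x hx => ?_
    rw [uIcc_of_le (by positivity)] at hx
    simp only [abs_of_nonneg (cos_nonneg_of_mem_Icc ⟨by linarith [hx.1, pi_pos], hx.2⟩)]
  calc ∫ x in (0:ℝ)..2 * π, |cos x| ^ p = 2 * ∫ x in (0:ℝ)..π, |cos x| ^ p := by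
        simpa [two_mul] using hper.intervalIntegral_add_zsmul_eq 2 0 hint
    _ = 2 * ((∫ x in 0..π / 2, |cos x| ^ p) + ∫ x in π / 2..π, |cos x| ^ p) := by
        rw [integral_add_adjacent_intervals (hint _ _) (hint _ _)]
    _ = 4 * ∫ x in (0:ℝ)..π / 2, cos x ^ p := by rw [hsymm, habs]; ring

theorem integral_abs_cos_sub_rpow_zero_two_pi {p : ℝ} (hp : 0 ≤ p) (ψ : ℝ) :
    ∫ x in (0:ℝ)..2 * π, |cos (ψ - x)| ^ p = 2 * √π * Gamma ((p + 1) / 2) / Gamma (p / 2 + 1) := by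
  have hper : Function.Periodic (fun x => |cos x| ^ p) (2 * π) := fun x => by simp [cos_add_two_pi]
  rw [← zero_add (2 * π), hper.intervalIntegral_comp_sub_left_eq 0 ψ, zero_add,
    integral_abs_cos_rpow_zero_two_pi hp, integral_cos_rpow_zero_pi_div_two (by linarith)]
  have hΓ := (Gamma_pos_of_pos (show 0 < p / 2 + 1 by linarith)).ne'
  field_simp
  ring

theorem sum_fin_integral_adjacent_intervals {E : Type*} [NormedAddCommGroup E] [NormedSpace ℝ E]
    {f : ℝ → E} (hf : ∀ a b, IntervalIntegrable f volume a b) (h : ℝ) (n : ℕ) :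
    ∑ k : Fin n, ∫ x in k * h..(k + 1) * h, f x = ∫ x in 0..n * h, f x := by
  rw [Fin.sum_univ_eq_sum_range (fun k : ℕ => ∫ x in k * h..(k + 1) * h, f x)]
  simpa using sum_integral_adjacent_intervals (a := fun k : ℕ => k * h) (n := n)
    fun k _ => hf _ _

def IsBernoulli {Ω : Type*} [MeasurableSpace Ω] (ρ : Ω → ℝ) (η : ℝ) (μ : Measure Ω) : Prop :=
  μ {ω | ρ ω = 1} = ENNReal.ofReal η ∧ μ {ω | ρ ω = 0} = ENNReal.ofReal (1 - η)

namespace IsBernoulli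

variable {Ω : Type*} [MeasurableSpace Ω] {μ : Measure Ω} [IsProbabilityMeasure μ]
  {ρ : Ω → ℝ} {η : ℝ}

theorem ae_eq_one_or_eq_zero (h : IsBernoulli ρ η μ) (hρ : Measurable ρ) (hη : η ∈ Icc 0 1) :
    ∀ᵐ ω ∂μ, ρ ω = 1 ∨ ρ ω = 0 := by
  have h1 : MeasurableSet {ω | ρ ω = 1} := hρ (measurableSet_singleton 1)
  have h0 : MeasurableSet {ω | ρ ω = 0} := hρ (measurableSet_singleton 0)
  have hdisj : Disjoint {ω | ρ ω = 1} {ω | ρ ω = 0} :=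
    disjoint_left.2 fun _ h1 h0 => one_ne_zero (h1.symm.trans h0)
  have hfull : μ ({ω | ρ ω = 1} ∪ {ω | ρ ω = 0}) = μ univ := by
    rw [measure_union hdisj h0, h.1, h.2, ← ENNReal.ofReal_add hη.1 (by linarith [hη.2]),
      measure_univ]
    norm_num
  exact (ae_mem_iff_measure_eq (h1.union h0).nullMeasurableSet).2 hfull

theorem integral_eq (h : IsBernoulli ρ η μ) (hρ : Measurable ρ) (hη : η ∈ Icc 0 1) :
    ∫ ω, ρ ω ∂μ = η := by
  have hind : ρ =ᵐ[μ] {ω | ρ ω = 1}.indicator fun _ => 1 := by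
    filter_upwards [h.ae_eq_one_or_eq_zero hρ hη] with ω hω
    rcases hω with h1 | h0 <;> simp [*]
  have h1 : MeasurableSet {ω | ρ ω = 1} := hρ (measurableSet_singleton 1)
  rw [integral_congr_ae hind, integral_indicator_const _ h1,
    measureReal_def, h.1, ENNReal.toReal_ofReal hη.1, smul_eq_mul, mul_one]

theorem integrable (h : IsBernoulli ρ η μ) (hρ : Measurable ρ) (hη : η ∈ Icc 0 1) :
    Integrable ρ μ :=
  Integrable.of_bound hρ.aestronglyMeasurable 1 <| by
    filter_upwards [h.ae_eq_one_or_eq_zero hρ hη] with ω hω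
    rcases hω with h1 | h0 <;> simp [*]

end IsBernoulli

namespace MeasureTheory.pdf.IsUniform

variable {Ω E F : Type*} [MeasurableSpace Ω] {μ : Measure Ω} [NormedAddCommGroup F]
  [NormedSpace ℝ F]

theorem integral_comp [MeasurableSpace E] {m : Measure E} {X : Ω → E} {s : Set E}
    (hu : IsUniform X s μ m) (hX : AEMeasurable X μ) {g : E → F}
    (hg : AEStronglyMeasurable g (m.restrict s)) :
    ∫ ω, g (X ω) ∂μ = (m s)⁻¹.toReal • ∫ x in s, g x ∂m := by
  rw [← integral_map hX (by rw [hu]; exact hg.smul_measure _), hu, ProbabilityTheory.cond,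
    integral_smul_measure]

theorem integral_comp_Icc {X : Ω → ℝ} {a b : ℝ} (hab : a ≤ b) (hu : IsUniform X (Icc a b) μ)
    (hX : AEMeasurable X μ) {g : ℝ → F} (hg : AEStronglyMeasurable g (volume.restrict (Icc a b))) :
    ∫ ω, g (X ω) ∂μ = (b - a)⁻¹ • ∫ x in a..b, g x := by
  rw [hu.integral_comp hX hg, Real.volume_Icc, ENNReal.toReal_inv,
    ENNReal.toReal_ofReal (sub_nonneg.2 hab), integral_Icc_eq_integral_Ioc, ← integral_of_le hab]

end MeasureTheory.pdf.IsUniform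

theorem IsBernoulli.integral_mul_comp_of_isUniform {Ω : Type*} [MeasurableSpace Ω]
    {μ : Measure Ω} [IsProbabilityMeasure μ] {ρ θ : Ω → ℝ} {η a b : ℝ}
    (hρ : IsBernoulli ρ η μ) (hρm : Measurable ρ) (hη : η ∈ Icc 0 1) (hab : a ≤ b)
    (hθ : pdf.IsUniform θ (Icc a b) μ) (hθm : Measurable θ) (hind : IndepFun ρ θ μ)
    {g : ℝ → ℝ} (hg : Measurable g) :
    ∫ ω, ρ ω * g (θ ω) ∂μ = η * ((b - a)⁻¹ * ∫ x in a..b, g x) := by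
  rw [← hρ.integral_eq hρm hη, ← smul_eq_mul (a := (b - a)⁻¹),
    ← hθ.integral_comp_Icc hab hθm.aemeasurable hg.aestronglyMeasurable]
  exact (hind.comp measurable_id hg).integral_mul_eq_mul_integral hρm.aestronglyMeasurable
    (hg.comp hθm).aestronglyMeasurable

theorem expected_beamforming_gain_general
    {Ω : Type*} [MeasureSpace Ω] (μ : Measure Ω) [IsProbabilityMeasure μ]
    (η : ℝ) (hη : η ∈ Set.Icc (0 : ℝ) 1) (V wh ψ : ℝ) (hwh : wh < 0)
    (ρ : Fin 3 → Ω → ℝ) (θ : Fin 3 → Ω → ℝ)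
    (hρmeas : ∀ c, Measurable (ρ c)) (hθmeas : ∀ c, Measurable (θ c))
    (hρ : ∀ c, μ {ω | ρ c ω = 1} = ENNReal.ofReal η ∧
               μ {ω | ρ c ω = 0} = ENNReal.ofReal (1 - η))
    (hθ : ∀ c : Fin 3, pdf.IsUniform (θ c)
      (Set.Icc (π / 3 * (2 * ((c : ℝ) + 1) - 1) - π / 3)
               (π / 3 * (2 * ((c : ℝ) + 1) - 1) + π / 3)) μ)
    (hindep : ∀ c, IndepFun (ρ c) (θ c) μ) :
    ∫ ω, (∑ c : Fin 3, ρ c ω * |cos (ψ - θ c ω)| ^ (-(2 * wh)) * V) ∂μ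
      = 3 * η * V * Gamma (1 / 2 - wh) / (Real.sqrt π * Gamma (1 - wh)) := by
  have hp : 0 ≤ -(2 * wh) := by linarith
  have hbern : ∀ c, IsBernoulli (ρ c) η μ := hρ
  set f : ℝ → ℝ := fun x => |cos (ψ - x)| ^ (-(2 * wh))
  have hf : Continuous f :=
    (continuous_cos.comp (continuous_const.sub continuous_id)).abs.rpow_const fun _ => Or.inr hp
  have hf_le : ∀ x, ‖f x‖ ≤ 1 := fun x => by
    rw [norm_of_nonneg (by positivity)]
    exact rpow_le_one (abs_nonneg _) (abs_cos_le_one _) hp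
  have hsector : ∀ c : Fin 3, ∫ ω, ρ c ω * f (θ c ω) * V ∂μ
      = η * V * (3 / (2 * π)) * ∫ x in c * (2 * π / 3)..(c + 1) * (2 * π / 3), f x := by
    intro c
    have hu := hθ c
    rw [show π / 3 * (2 * ((c : ℝ) + 1) - 1) - π / 3 = c * (2 * π / 3) by ring,
      show π / 3 * (2 * ((c : ℝ) + 1) - 1) + π / 3 = (c + 1) * (2 * π / 3) by ring] at hu
    rw [MeasureTheory.integral_mul_const, (hbern c).integral_mul_comp_of_isUniform (hρmeas c) hη
      (by linarith [pi_pos]) hu (hθmeas c) (hindep c) hf.measurable]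
    field_simp
    ring
  have hint : ∀ c : Fin 3, Integrable (fun ω => ρ c ω * f (θ c ω) * V) μ := fun c =>
    (((hbern c).integrable (hρmeas c) hη).mul_bdd
      (hf.measurable.comp (hθmeas c)).aestronglyMeasurable
      (.of_forall fun ω => hf_le (θ c ω))).mul_const V
  rw [integral_finsetSum _ fun c _ => hint c]
  simp_rw [hsector]
  rw [← Finset.mul_sum, sum_fin_integral_adjacent_intervals (fun a b => hf.intervalIntegrable a b),
    show ((3 : ℕ) : ℝ) * (2 * π / 3) = 2 * π by push_cast; ring,
    integral_abs_cos_sub_rpow_zero_two_pi hp,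
    show (-(2 * wh) + 1) / 2 = 1 / 2 - wh by ring, show -(2 * wh) / 2 + 1 = 1 - wh by ring]
  have hΓ := (Gamma_pos_of_pos (show 0 < 1 - wh by linarith)).ne'
  field_simp
  rw [sq_sqrt pi_pos.le]

/-- Expected 3D beamforming gain with fixed vertical pattern value V:
E[Σ_c ρ_c H(α_c) V] = 3ηV Γ(1/2 − w_h)/(√π Γ(1 − w_h)), where ρ_c ∼ Bernoulli(η)
independent of the uniform sector angles θ_c, α_c = ψ − θ_c, and
H(α) = |cos α|^{−2w_h} with w_h < 0. -/
theorem expected_beamforming_gain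
    {Ω : Type*} [MeasureSpace Ω] (μ : Measure Ω) [IsProbabilityMeasure μ]
    (η : ℝ) (hη : η ∈ Set.Icc (0 : ℝ) 1) (V wh ψ : ℝ) (hV : 0 < V) (hwh : wh < 0)
    (ρ : Fin 3 → Ω → ℝ) (θ : Fin 3 → Ω → ℝ)
    (hρmeas : ∀ c, Measurable (ρ c)) (hθmeas : ∀ c, Measurable (θ c))
    (hρ : ∀ c, μ {ω | ρ c ω = 1} = ENNReal.ofReal η ∧
               μ {ω | ρ c ω = 0} = ENNReal.ofReal (1 - η))
    (hθ : ∀ c : Fin 3, pdf.IsUniform (θ c)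
      (Set.Icc (π / 3 * (2 * ((c : ℝ) + 1) - 1) - π / 3)
               (π / 3 * (2 * ((c : ℝ) + 1) - 1) + π / 3)) μ)
    (hindep : ∀ c, IndepFun (ρ c) (θ c) μ) :
    ∫ ω, (∑ c : Fin 3, ρ c ω * |cos (ψ - θ c ω)| ^ (-(2 * wh)) * V) ∂μ
      = 3 * η * V * Gamma (1 / 2 - wh) / (Real.sqrt π * Gamma (1 - wh)) :=
  expected_beamforming_gain_general μ η hη V wh ψ hwh ρ θ hρmeas hθmeas hρ hθ hindep
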